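/- Let F be a doubly-indexed family of complex numbers F_{m,n} defined for positive integers m,n such that F_{a,b} = F_{c,d} whenever ab = cd and gcd(a,b) = gcd(c,d). Then there exists a family of numbers F_k^{(s)} (indexed by positive integers s and k) such that F_k^{(1)} = F_{k,1} and for all positive m,n: F_{m,n} = \sum_{s | gcd(m,n)} (1/s) F_{mn/s^2}^{(s)}. -/

import Mathlib

/-!
Since `F m n` depends only on `(m n, gcd m n)`, we have `F m n = f (gcd m n)` with
`f e = F (m n / e) e`. Möbius inversion of `f` over the divisors of `g = gcd m n` writes
`f g` as a sum over `s ∣ g`, and the `s`-th term only involves `m n / s²`, which defines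
the replicate `F^{(s)}_{m n / s²}`.
-/

open ArithmeticFunction

/-- The paper's `F^{(s)}_k = s ∑_{d ∣ s} μ(d) F_{m,n}`, evaluated at the representative
`(m, n) = (d s k, s / d)` of product `s² k` and gcd `s / d`. -/
noncomputable def replicate (F : ℕ → ℕ → ℂ) (s k : ℕ) : ℂ :=
  (s : ℂ) * ∑ x ∈ s.divisorsAntidiagonal, (moebius x.1 : ℂ) * F (x.1 * s * k) x.2

theorem replicate_one (F : ℕ → ℕ → ℂ) (k : ℕ) : replicate F 1 k = F k 1 := by
  simp [replicate, Nat.divisorsAntidiagonal_one]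

theorem sum_divisors_sum_divisorsAntidiagonal_moebius {R : Type*} [Ring R] (f : ℕ → R) {g : ℕ}
    (hg : 0 < g) :
    ∑ s ∈ g.divisors, ∑ x ∈ s.divisorsAntidiagonal, (moebius x.1 : R) * f x.2 = f g :=
  (sum_eq_iff_sum_mul_moebius_eq
    (f := fun s => ∑ x ∈ s.divisorsAntidiagonal, (moebius x.1 : R) * f x.2) (g := f)).mpr
    (fun _ _ => rfl) g hg

theorem inv_mul_replicate_div_sq (F : ℕ → ℕ → ℂ) {s N : ℕ} (hs : 0 < s) (hsN : s ^ 2 ∣ N) :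
    1 / (s : ℂ) * replicate F s (N / s ^ 2) =
      ∑ x ∈ s.divisorsAntidiagonal, (moebius x.1 : ℂ) * F (N / x.2) x.2 := by
  obtain ⟨t, rfl⟩ := hsN
  rw [replicate, Nat.mul_div_cancel_left _ (pow_pos hs 2), ← mul_assoc, one_div,
    inv_mul_cancel₀ (by exact_mod_cast hs.ne'), one_mul]
  refine Finset.sum_congr rfl fun x hx => ?_
  obtain ⟨rfl, -⟩ := Nat.mem_divisorsAntidiagonal.mp hx
  have hb : 0 < x.2 := Nat.pos_of_mem_divisors (Nat.snd_mem_divisors_of_mem_antidiagonal hx)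
  rw [show (x.1 * x.2) ^ 2 * t = x.1 * (x.1 * x.2) * t * x.2 by ring, Nat.mul_div_cancel _ hb]

theorem eq_of_mul_div_gcd_gcd {α : Type*} (F : ℕ → ℕ → α)
    (hF : ∀ a b c d : ℕ, 0 < a → 0 < b → 0 < c → 0 < d →
      a * b = c * d → Nat.gcd a b = Nat.gcd c d → F a b = F c d)
    {m n : ℕ} (hm : 0 < m) (hn : 0 < n) :
    F m n = F (m * n / Nat.gcd m n) (Nat.gcd m n) := by
  have hg : 0 < Nat.gcd m n := Nat.gcd_pos_of_pos_left _ hm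
  have hgmn : Nat.gcd m n ∣ m * n := (Nat.gcd_dvd_left m n).mul_right n
  have hdvd : Nat.gcd m n ∣ m * n / Nat.gcd m n := by
    rw [← Nat.div_mul_right_comm (Nat.gcd_dvd_left m n)]
    exact (Nat.gcd_dvd_right m n).mul_left _
  exact hF _ _ _ _ hm hn (Nat.div_pos (Nat.le_of_dvd (Nat.mul_pos hm hn) hgmn) hg) hg
    (Nat.div_mul_cancel hgmn).symm (Nat.gcd_eq_right hdvd).symm

/-- If `F a b` depends only on `(a*b, gcd a b)` for positive `a, b`, then there
exists a family `G s k` (the replicates `F_k^{(s)}`) with `G 1 k = F k 1` and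
`F m n = ∑_{s | gcd(m,n)} (1/s) * G s (m*n/s^2)`. -/
theorem stmt0 (F : ℕ → ℕ → ℂ)
    (hF : ∀ a b c d : ℕ, 0 < a → 0 < b → 0 < c → 0 < d →
      a * b = c * d → Nat.gcd a b = Nat.gcd c d → F a b = F c d) :
    ∃ G : ℕ → ℕ → ℂ,
      (∀ k : ℕ, 0 < k → G 1 k = F k 1) ∧
      (∀ m n : ℕ, 0 < m → 0 < n →
        F m n = ∑ s ∈ (Nat.gcd m n).divisors, (1 / (s : ℂ)) * G s (m * n / s ^ 2)) := by
  refine ⟨replicate F, fun k _ => replicate_one F k, fun m n hm hn => ?_⟩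
  have hg2 : Nat.gcd m n ^ 2 ∣ m * n :=
    sq (Nat.gcd m n) ▸ Nat.mul_dvd_mul (Nat.gcd_dvd_left m n) (Nat.gcd_dvd_right m n)
  rw [eq_of_mul_div_gcd_gcd F hF hm hn, ← sum_divisors_sum_divisorsAntidiagonal_moebius
    (fun e => F (m * n / e) e) (Nat.gcd_pos_of_pos_left _ hm)]
  exact Finset.sum_congr rfl fun s hs => (inv_mul_replicate_div_sq F (Nat.pos_of_mem_divisors hs)
    ((pow_dvd_pow_of_dvd (Nat.dvd_of_mem_divisors hs) 2).trans hg2)).symm
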